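/- Let (φ_t) be a non-elliptic semigroup in the unit disc 𝔻 with Denjoy-Wolff point 1, and write C(φ_t(0)) = ρ_t e^{iθ_t} with ρ_t > 0, θ_t ∈ (−π/2, π/2), where C is the Cayley transform. Fix θ ∈ (0, π/2). Then there exists a constant Cθ > 0, depending only on θ, such that for every t ≥ 1 with |θ_t| ≤ θ and every s ≥ t, ω(ρ_s e^{iθ_s}, Θ_t, ℍ) ≥ Cθ, where Θ_t := {iy : y ∈ ℝ, |y| ≥ ρ_t}. -/

import Mathlib

open Complex Filter Topology Set MeasureTheory

noncomputable section

/-- The unit disc in the complex plane. -/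
def unitDisc : Set ℂ := {z : ℂ | ‖z‖ < 1}

/-- The inverse hyperbolic tangent: `arctanh x = (1/2)·log((1+x)/(1−x))`. -/
def arctanh (x : ℝ) : ℝ := (1 / 2) * Real.log ((1 + x) / (1 - x))

/-- The hyperbolic distance on the unit disc:
`k_𝔻(z,w) = arctanh |(z−w)/(1−conj(z)·w)|`. -/
def kD (z w : ℂ) : ℝ :=
  arctanh (‖(z - w) / (1 - (starRingEnd ℂ) z * w)‖)

/-- `φ` is a continuous one-parameter semigroup of holomorphic self-maps of the unit disc. -/
structure IsDiscSemigroup (φ : ℝ → ℂ → ℂ) : Prop where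
  mapsTo : ∀ t : ℝ, 0 ≤ t → Set.MapsTo (φ t) unitDisc unitDisc
  holo : ∀ t : ℝ, 0 ≤ t → DifferentiableOn ℂ (φ t) unitDisc
  id0 : ∀ z ∈ unitDisc, φ 0 z = z
  comp : ∀ s t : ℝ, 0 ≤ s → 0 ≤ t → ∀ z ∈ unitDisc, φ (t + s) z = φ t (φ s z)
  cont : ContinuousOn (fun p : ℝ × ℂ => φ p.1 p.2) (Set.Ici 0 ×ˢ unitDisc)

/-- A semigroup in the disc is non-elliptic if it has no fixed point in the disc
for positive times. -/
structure IsNonElliptic (φ : ℝ → ℂ → ℂ) extends IsDiscSemigroup φ : Prop where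
  noFixedPoint : ∀ t : ℝ, 0 < t → ∀ z ∈ unitDisc, φ t z ≠ z

/-- `τ` is the Denjoy-Wolff point of the semigroup `φ`: a boundary point to which
all orbits converge. -/
def IsDenjoyWolff (φ : ℝ → ℂ → ℂ) (τ : ℂ) : Prop :=
  ‖τ‖ = 1 ∧ ∀ z ∈ unitDisc, Tendsto (fun t => φ t z) atTop (𝓝 τ)

/-- `h` is a Koenigs function of the semigroup `φ`: univalent on the disc with
`h(φ_t(z)) = h(z) + it`. -/
def IsKoenigs (φ : ℝ → ℂ → ℂ) (h : ℂ → ℂ) : Prop :=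
  DifferentiableOn ℂ h unitDisc ∧ Set.InjOn h unitDisc ∧
    ∀ t : ℝ, 0 ≤ t → ∀ z ∈ unitDisc, h (φ t z) = h z + Complex.I * t

/-- `p` is the hyperbolic orthogonal projection onto the geodesic `(−1,1)·τ`:
for every `z` in the disc, `p z` lies on the geodesic and minimizes the hyperbolic
distance from `z` to the geodesic. -/
def IsOrthProjection (τ : ℂ) (p : ℂ → ℂ) : Prop :=
  ∀ z ∈ unitDisc,
    (∃ r : ℝ, r ∈ Set.Ioo (-1 : ℝ) 1 ∧ p z = (r : ℂ) * τ) ∧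
    ∀ r : ℝ, r ∈ Set.Ioo (-1 : ℝ) 1 → kD z (p z) ≤ kD z ((r : ℂ) * τ)

/-- The total speed `v(t) = k_𝔻(0, φ_t(0))` of a semigroup. -/
def totalSpeed (φ : ℝ → ℂ → ℂ) (t : ℝ) : ℝ := kD 0 (φ t 0)

/-- The orthogonal speed `v^o(t) = k_𝔻(0, π(φ_t(0)))` of a semigroup, relative to the
orthogonal projection `p` onto the geodesic `(−1,1)·τ`. -/
def orthSpeed (φ : ℝ → ℂ → ℂ) (p : ℂ → ℂ) (t : ℝ) : ℝ := kD 0 (p (φ t 0))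

/-- `δ⁺(t)`: the truncated distance from `z₀ + it` to the part of the complement of `Ω`
lying to the right of the vertical line through `z₀`. -/
def deltaPlus (Ω : Set ℂ) (z₀ : ℂ) (t : ℝ) : ℝ :=
  min t (sInf {d : ℝ | ∃ w : ℂ, w ∉ Ω ∧ z₀.re ≤ w.re ∧ d = ‖w - (z₀ + Complex.I * t)‖})

/-- `δ⁻(t)`: the truncated distance from `z₀ + it` to the part of the complement of `Ω`
lying to the left of the vertical line through `z₀`. -/
def deltaMinus (Ω : Set ℂ) (z₀ : ℂ) (t : ℝ) : ℝ :=
  min t (sInf {d : ℝ | ∃ w : ℂ, w ∉ Ω ∧ w.re ≤ z₀.re ∧ d = ‖w - (z₀ + Complex.I * t)‖})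

/-- `Ω` is quasi-symmetric with respect to vertical axes. -/
def QuasiSymmetric (Ω : Set ℂ) : Prop :=
  ∃ z₀ ∈ Ω, ∃ K : ℝ, 0 < K ∧ ∀ t : ℝ, 0 ≤ t →
    K⁻¹ * deltaMinus Ω z₀ t ≤ deltaPlus Ω z₀ t ∧ deltaPlus Ω z₀ t ≤ K * deltaMinus Ω z₀ t

/-- `Ω` is starlike with respect to `w₀`: every segment from `w₀` to a point of `Ω`
is contained in `Ω`. -/
def StarlikeWrt (Ω : Set ℂ) (w₀ : ℂ) : Prop :=
  ∀ w ∈ Ω, ∀ s : ℝ, s ∈ Set.Icc (0 : ℝ) 1 → (1 - (s : ℂ)) * w₀ + (s : ℂ) * w ∈ Ω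

/-- The orbit of `0` converges non-tangentially to `τ`:
`limsup_{t→+∞} |τ − φ_t(0)|/(1 − |φ_t(0)|) < +∞`. -/
def ConvergesNonTangentially (φ : ℝ → ℂ → ℂ) (τ : ℂ) : Prop :=
  Filter.limsup (fun t : ℝ =>
    ((‖τ - φ t 0‖ / (1 - ‖φ t 0‖) : ℝ) : EReal)) atTop < ⊤

/-- `f` is eventually non-decreasing. -/
def EventuallyNondecreasing (f : ℝ → ℝ) : Prop :=
  ∃ T : ℝ, ∀ s t : ℝ, T ≤ s → s ≤ t → f s ≤ f t

/-- The Cayley transform from the unit disc to the right half-plane. -/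
def cayley (z : ℂ) : ℂ := (1 + z) / (1 - z)

/-- The inverse Cayley transform, from the right half-plane to the unit disc. -/
def cayleyInv (w : ℂ) : ℂ := (w - 1) / (w + 1)

/-- `Θ_ρ := {iy : y ∈ ℝ, |y| ≥ ρ}`, a subset of the imaginary axis. -/
def Theta (ρ : ℝ) : Set ℂ := {z : ℂ | ∃ y : ℝ, z = Complex.I * (y : ℂ) ∧ ρ ≤ |y|}

/-- `Γ*_t := {iy : |y| ≥ inf_{u ≥ t} ρ_u}`. -/
def GammaStar (ρ : ℝ → ℝ) (t : ℝ) : Set ℂ :=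
  {z : ℂ | ∃ y : ℝ, z = Complex.I * (y : ℂ) ∧ sInf {r : ℝ | ∃ u : ℝ, t ≤ u ∧ r = ρ u} ≤ |y|}

/-- The harmonic measure at `w` (a point of the right half-plane) of a Borel subset `E`
of the imaginary axis, with respect to the right half-plane:
`ω(w,E,ℍ) = (1/π) ∫_{{s : is ∈ E}} Re w/((Re w)² + (Im w − s)²) ds`. -/
def omegaH (w : ℂ) (E : Set ℂ) : ℝ :=
  (1 / Real.pi) *
    ∫ s in {s : ℝ | Complex.I * (s : ℂ) ∈ E}, w.re / (w.re ^ 2 + (w.im - s) ^ 2)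

/-- The Euclidean arclength of the closed arc of the unit circle containing `1`
with endpoints `a` and `conj a` (where `Im a > 0`), namely `2·arg a`. -/
def arcLength (a : ℂ) : ℝ := 2 * Complex.arg a

/-- The harmonic measure at `0` with respect to the unit disc of the closed arc of the
unit circle containing `1` with endpoints `a` and `conj a`: `ℓ(A)/(2π)`. -/
def omegaDiscZero (a : ℂ) : ℝ := arcLength a / (2 * Real.pi)

/-- `Π_α := {z ∈ ℂ : Im z > |Re z|^α}`. -/
def PiDom (α : ℝ) : Set ℂ := {z : ℂ | |z.re| ^ α < z.im}

/-- `W(θ) := {z ≠ 0 : arg z ∈ (π/2 − θ, π/2)}`. -/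
def Wsector (θ : ℝ) : Set ℂ :=
  {z : ℂ | z ≠ 0 ∧ Complex.arg z ∈ Set.Ioo (Real.pi / 2 - θ) (Real.pi / 2)}

/-- `Ξ(α,θ) := ({Re z ≤ 0} ∩ Π_α) ∪ W(θ)`. -/
def Xi (α θ : ℝ) : Set ℂ := ({z : ℂ | z.re ≤ 0} ∩ PiDom α) ∪ Wsector θ

/-! The real part of the Cayley transform is the horocycle function at the Denjoy–Wolff point `1`.
Schwarz–Pick for `φ_h` at the points `φ_u(0)` and `φ_t(0)`, divided by `1 - |φ_u(0)|²` and with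
`u → ∞`, shows that `Re C(φ_t(0)) = ρ_t cos θ_t` is nondecreasing in `t`; the quotient
`(1 - |φ_{u+h}(0)|²)/(1 - |φ_u(0)|²)` cannot stay above a constant `c > 1`, since `1 - |φ_u(0)|²`
is bounded. Hence `Re C(φ_s(0)) ≥ ρ_t cos θ`, so the Poisson kernel of `ℍ` at `C(φ_s(0))` has
width at least `ρ_t cos θ`, and it gives mass `≥ C(θ)` to an interval of that length inside `Θ_t`. -/

open ComplexConjugate

lemma unitDisc_eq_ball : unitDisc = Metric.ball (0 : ℂ) 1 := by
  ext z; simp [unitDisc]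

lemma zero_mem_unitDisc : (0 : ℂ) ∈ unitDisc := by
  simp [unitDisc]

lemma normSq_lt_one_of_mem_unitDisc {z : ℂ} (hz : z ∈ unitDisc) : normSq z < 1 := by
  have : ‖z‖ < 1 := hz
  rw [← Complex.sq_norm]; nlinarith [norm_nonneg z]

lemma one_sub_conj_mul_ne_zero {a z : ℂ} (ha : a ∈ unitDisc) (hz : z ∈ unitDisc) :
    1 - conj a * z ≠ 0 := by
  have ha' : ‖a‖ < 1 := ha
  have hz' : ‖z‖ < 1 := hz
  have : ‖conj a * z‖ < 1 := by
    rw [norm_mul, Complex.norm_conj]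
    nlinarith [norm_nonneg a, norm_nonneg z]
  intro h
  rw [← sub_eq_zero.1 h, norm_one] at this
  exact lt_irrefl _ this

lemma normSq_one_sub_conj_mul_sub_normSq_sub (a z : ℂ) :
    normSq (1 - conj a * z) - normSq (a - z) = (1 - normSq a) * (1 - normSq z) := by
  simp only [Complex.normSq_apply, sub_re, sub_im, mul_re, mul_im, conj_re, conj_im,
    one_re, one_im]
  ring

def mobius (a z : ℂ) : ℂ := (a - z) / (1 - conj a * z)

def horoKernel (b z : ℂ) : ℝ := (1 - normSq z) / normSq (1 - conj b * z)

section Mobius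

variable {a z : ℂ}

lemma one_sub_normSq_mobius (ha : a ∈ unitDisc) (hz : z ∈ unitDisc) :
    1 - normSq (mobius a z) = (1 - normSq a) * horoKernel a z := by
  have hd := normSq_pos.2 (one_sub_conj_mul_ne_zero ha hz)
  rw [mobius, horoKernel, normSq_div, ← mul_div_assoc, eq_div_iff hd.ne', sub_mul,
    div_mul_cancel₀ _ hd.ne', one_mul, normSq_one_sub_conj_mul_sub_normSq_sub]

lemma horoKernel_pos (b : ℂ) (hz : z ∈ unitDisc) (hbz : 1 - conj b * z ≠ 0) :
    0 < horoKernel b z :=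
  div_pos (sub_pos.2 (normSq_lt_one_of_mem_unitDisc hz)) (normSq_pos.2 hbz)

lemma mapsTo_mobius (ha : a ∈ unitDisc) : MapsTo (mobius a) unitDisc unitDisc := by
  intro z hz
  have h := one_sub_normSq_mobius ha hz
  have hpos : 0 < 1 - normSq (mobius a z) := h ▸ mul_pos
    (sub_pos.2 (normSq_lt_one_of_mem_unitDisc ha))
    (horoKernel_pos a hz (one_sub_conj_mul_ne_zero ha hz))
  show ‖mobius a z‖ < 1
  rw [← sq_lt_one_iff₀ (norm_nonneg _), Complex.sq_norm]
  linarith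

lemma mobius_zero (a : ℂ) : mobius a 0 = a := by simp [mobius]

lemma mobius_self (a : ℂ) : mobius a a = 0 := by simp [mobius]

lemma mobius_mobius (ha : a ∈ unitDisc) (hz : z ∈ unitDisc) : mobius a (mobius a z) = z := by
  have hd := one_sub_conj_mul_ne_zero ha hz
  have haa := one_sub_conj_mul_ne_zero ha ha
  have hden : 1 - conj a * mobius a z = (1 - conj a * a) / (1 - conj a * z) := by
    unfold mobius; field_simp; ring
  rw [mobius, hden, mobius, div_eq_iff (div_ne_zero haa hd), mul_div_assoc', eq_div_iff hd,
    sub_mul, div_mul_cancel₀ _ hd]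
  ring

lemma differentiableOn_mobius (ha : a ∈ unitDisc) :
    DifferentiableOn ℂ (mobius a) unitDisc :=
  DifferentiableOn.div (by fun_prop) (by fun_prop) fun _ hz => one_sub_conj_mul_ne_zero ha hz

end Mobius

section SchwarzPick

variable {f : ℂ → ℂ} {z w : ℂ}

theorem norm_mobius_le_of_mapsTo (hf : DifferentiableOn ℂ f unitDisc)
    (hm : MapsTo f unitDisc unitDisc) (hz : z ∈ unitDisc) (hw : w ∈ unitDisc) :
    ‖mobius (f w) (f z)‖ ≤ ‖mobius w z‖ := by
  set g : ℂ → ℂ := mobius (f w) ∘ f ∘ mobius w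
  have hgm : MapsTo g unitDisc unitDisc :=
    (mapsTo_mobius (hm hw)).comp (hm.comp (mapsTo_mobius hw))
  have hgd : DifferentiableOn ℂ g unitDisc :=
    (differentiableOn_mobius (hm hw)).comp (hf.comp (differentiableOn_mobius hw)
      (mapsTo_mobius hw)) (hm.comp (mapsTo_mobius hw))
  have hg0 : g 0 = 0 := by simp only [g, Function.comp, mobius_zero, mobius_self]
  rw [unitDisc_eq_ball] at hgm hgd
  have := Complex.norm_le_norm_of_mapsTo_ball hgd (hgm.mono_right Metric.ball_subset_closedBall)
    hg0 (mapsTo_mobius hw hz)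
  simpa only [g, Function.comp, mobius_mobius hw hz] using this

theorem one_sub_normSq_mul_horoKernel_le (hf : DifferentiableOn ℂ f unitDisc)
    (hm : MapsTo f unitDisc unitDisc) (hz : z ∈ unitDisc) (hw : w ∈ unitDisc) :
    (1 - normSq w) * horoKernel w z ≤ (1 - normSq (f w)) * horoKernel (f w) (f z) := by
  rw [← one_sub_normSq_mobius hw hz, ← one_sub_normSq_mobius (hm hw) (hm hz), sub_le_sub_iff_left,
    ← Complex.sq_norm, ← Complex.sq_norm]
  exact pow_le_pow_left₀ (norm_nonneg _) (norm_mobius_le_of_mapsTo hf hm hz hw) 2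

end SchwarzPick

lemma horoKernel_one (z : ℂ) : horoKernel 1 z = (cayley z).re := by
  rw [horoKernel, cayley, Complex.div_re, ← add_div, map_one, one_mul]
  congr 1
  simp only [Complex.normSq_apply, add_re, add_im, sub_re, sub_im, one_re, one_im]
  ring

lemma tendsto_horoKernel {α : Type*} {l : Filter α} {b : α → ℂ} (hb : Tendsto b l (𝓝 1))
    {z : ℂ} (hz : z ≠ 1) : Tendsto (fun x => horoKernel (b x) z) l (𝓝 (cayley z).re) := by
  rw [← horoKernel_one]
  have hcont : ContinuousAt (fun b => horoKernel b z) 1 :=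
    continuousAt_const.div (by fun_prop) (by simpa [sub_eq_zero] using hz.symm)
  exact hcont.tendsto.comp hb

lemma ne_one_of_mem_unitDisc {z : ℂ} (hz : z ∈ unitDisc) : z ≠ 1 := by
  rintro rfl; simp [unitDisc] at hz

lemma cayley_re_pos {z : ℂ} (hz : z ∈ unitDisc) : 0 < (cayley z).re := by
  rw [← horoKernel_one]
  exact horoKernel_pos 1 hz (by simpa [sub_eq_zero] using (ne_one_of_mem_unitDisc hz).symm)

lemma not_eventually_mul_lt_add {q : ℝ → ℝ} {M c h : ℝ} (hqM : ∀ u, q u ≤ M)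
    (hq : ∀ᶠ u in atTop, 0 < q u) (hc : 1 < c) (hh : 0 ≤ h) :
    ¬ ∀ᶠ u in atTop, c * q u < q (u + h) := by
  intro hgrow
  obtain ⟨u₀, hu₀⟩ := eventually_atTop.1 (hq.and hgrow)
  have hpow : ∀ n : ℕ, c ^ n * q u₀ ≤ q (u₀ + n * h) := by
    intro n
    induction n with
    | zero => simp
    | succ n ih =>
      have hstep := (hu₀ (u₀ + n * h) (by nlinarith [n.cast_nonneg (α := ℝ)])).2
      calc c ^ (n + 1) * q u₀ = c * (c ^ n * q u₀) := by ring
        _ ≤ c * q (u₀ + n * h) := by gcongr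
        _ ≤ q (u₀ + ↑(n + 1) * h) := by push_cast; rw [add_one_mul, ← add_assoc]; exact hstep.le
  have hq₀ := (hu₀ u₀ le_rfl).1
  obtain ⟨n, hn⟩ := pow_unbounded_of_one_lt (M / q u₀) hc
  rw [div_lt_iff₀ hq₀] at hn
  linarith [hpow n, hqM (u₀ + n * h)]

namespace IsDiscSemigroup

variable {φ : ℝ → ℂ → ℂ}

/-- Julia's lemma for `φ_h` at the Denjoy–Wolff point. -/
theorem re_cayley_le_re_cayley_apply (hφ : IsDiscSemigroup φ)
    (hdw : Tendsto (fun u => φ u 0) atTop (𝓝 1)) {h : ℝ} (hh : 0 ≤ h) {z : ℂ}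
    (hz : z ∈ unitDisc) : (cayley z).re ≤ (cayley (φ h z)).re := by
  set w := φ h z
  have hw : w ∈ unitDisc := hφ.mapsTo h hh hz
  have horbit : ∀ u, 0 ≤ u → φ u 0 ∈ unitDisc := fun u hu => hφ.mapsTo u hu zero_mem_unitDisc
  by_contra! hlt
  obtain ⟨c, hc1, hcw⟩ : ∃ c, 1 < c ∧ c * (cayley w).re < (cayley z).re := by
    obtain ⟨c, hc1, hc⟩ := exists_between ((one_lt_div (cayley_re_pos hw)).2 hlt)
    exact ⟨c, hc1, (lt_div_iff₀ (cayley_re_pos hw)).1 hc⟩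
  have hL := tendsto_horoKernel hdw (ne_one_of_mem_unitDisc hz)
  have hR := (tendsto_horoKernel (hdw.comp (tendsto_atTop_add_const_right atTop h tendsto_id))
    (ne_one_of_mem_unitDisc hw)).const_mul c
  refine not_eventually_mul_lt_add (q := fun u => 1 - normSq (φ u 0)) (M := 1)
    (fun u => by simp [normSq_nonneg]) ?_ hc1 hh ?_
  · filter_upwards [eventually_ge_atTop 0] with u hu
    exact sub_pos.2 (normSq_lt_one_of_mem_unitDisc (horbit u hu))
  filter_upwards [hR.eventually_lt hL hcw, eventually_ge_atTop 0] with u hlt' hu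
  have hsp := one_sub_normSq_mul_horoKernel_le (hφ.holo h hh) (hφ.mapsTo h hh) hz (horbit u hu)
  rw [← hφ.comp u h hu hh 0 zero_mem_unitDisc, add_comm] at hsp
  have hq := sub_pos.2 (normSq_lt_one_of_mem_unitDisc (horbit u hu))
  have hK := horoKernel_pos (φ (u + h) 0) hw
    (one_sub_conj_mul_ne_zero (horbit (u + h) (by linarith)) hw)
  simp only [Function.comp, id] at hlt'
  have hprod : c * (1 - normSq (φ u 0)) * horoKernel (φ (u + h) 0) w
      < (1 - normSq (φ (u + h) 0)) * horoKernel (φ (u + h) 0) w := by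
    nlinarith
  exact lt_of_mul_lt_mul_right hprod hK.le

theorem monotoneOn_re_cayley_orbit (hφ : IsDiscSemigroup φ)
    (hdw : Tendsto (fun u => φ u 0) atTop (𝓝 1)) :
    MonotoneOn (fun t => (cayley (φ t 0)).re) (Ici 0) := by
  intro t ht s _ hts
  have h := hφ.re_cayley_le_re_cayley_apply hdw (sub_nonneg.2 hts)
    (hφ.mapsTo t ht zero_mem_unitDisc)
  rwa [← hφ.comp t (s - t) ht (sub_nonneg.2 hts) 0 zero_mem_unitDisc, sub_add_cancel] at h

end IsDiscSemigroup

section Poisson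

variable {x y ρ : ℝ}

lemma integrable_poisson (hx : 0 < x) (y : ℝ) :
    Integrable (fun s : ℝ => x / (x ^ 2 + (y - s) ^ 2)) := by
  have h := ((integrable_inv_one_add_sq.comp_div hx.ne').comp_sub_right y).const_mul x⁻¹
  refine h.congr (Eventually.of_forall fun s => ?_)
  have : 0 < x ^ 2 + (y - s) ^ 2 := by positivity
  field_simp
  ring

lemma le_setIntegral_poisson_Icc (hx : 0 < x) {a r : ℝ} (hr : ∀ s ∈ Icc a (a + x), |y - s| ≤ r) :
    x ^ 2 / (x ^ 2 + r ^ 2) ≤ ∫ s in Icc a (a + x), x / (x ^ 2 + (y - s) ^ 2) := by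
  have hbound : ∀ s ∈ Icc a (a + x), x / (x ^ 2 + r ^ 2) ≤ x / (x ^ 2 + (y - s) ^ 2) := by
    intro s hs
    gcongr x / (x ^ 2 + ?_)
    rw [← sq_abs]
    exact pow_le_pow_left₀ (abs_nonneg _) (hr s hs) 2
  have h := setIntegral_ge_of_const_le_real measurableSet_Icc measure_Icc_lt_top.ne hbound
    (integrable_poisson hx y).integrableOn
  rwa [Real.volume_real_Icc_of_le (by linarith), add_sub_cancel_left, div_mul_eq_mul_div,
    ← sq] at h

/-- Witnessed by the interval of length `x` at distance `ρ` from `y`, on the side of `y` away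
from `0`. -/
lemma le_setIntegral_poisson_abs_ge (hx : 0 < x) (hρ : 0 ≤ ρ) :
    x ^ 2 / (x ^ 2 + (ρ + x) ^ 2) ≤ ∫ s in {s : ℝ | ρ ≤ |s|}, x / (x ^ 2 + (y - s) ^ 2) := by
  obtain ⟨a, hsub, hdist⟩ : ∃ a, Icc a (a + x) ⊆ {s : ℝ | ρ ≤ |s|} ∧
      ∀ s ∈ Icc a (a + x), |y - s| ≤ ρ + x := by
    rcases le_total 0 y with hy | hy
    · refine ⟨y + ρ, fun s hs => ?_, fun s hs => ?_⟩
      · exact (by linarith [hs.1] : ρ ≤ s).trans (le_abs_self s)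
      · rw [abs_sub_comm, abs_of_nonneg (by linarith [hs.1])]; linarith [hs.2]
    · refine ⟨y - ρ - x, fun s hs => ?_, fun s hs => ?_⟩
      · exact (by linarith [hs.2] : ρ ≤ -s).trans (neg_le_abs s)
      · rw [abs_of_nonneg (by linarith [hs.2])]; linarith [hs.1]
  calc x ^ 2 / (x ^ 2 + (ρ + x) ^ 2)
      ≤ ∫ s in Icc a (a + x), x / (x ^ 2 + (y - s) ^ 2) := le_setIntegral_poisson_Icc hx hdist
    _ ≤ ∫ s in {s : ℝ | ρ ≤ |s|}, x / (x ^ 2 + (y - s) ^ 2) :=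
      setIntegral_mono_set (integrable_poisson hx y).integrableOn
        (Eventually.of_forall fun s => by positivity) hsub.eventuallyLE

end Poisson

lemma omegaH_Theta (w : ℂ) (ρ : ℝ) :
    omegaH w (Theta ρ) = (1 / Real.pi) *
      ∫ s in {s : ℝ | ρ ≤ |s|}, w.re / (w.re ^ 2 + (w.im - s) ^ 2) := by
  have hset : {s : ℝ | Complex.I * (s : ℂ) ∈ Theta ρ} = {s : ℝ | ρ ≤ |s|} := by
    ext s
    simp only [Theta, mem_ofPred_eq, mul_right_inj' Complex.I_ne_zero, ofReal_inj]
    exact ⟨fun ⟨y, hsy, hy⟩ => hsy ▸ hy, fun hs => ⟨s, rfl, hs⟩⟩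
  rw [omegaH, hset]

lemma le_omegaH_Theta {w : ℂ} {ρ κ : ℝ} (hw : 0 < w.re) (hρ : 0 ≤ ρ) (hρκ : ρ ≤ κ * w.re) :
    1 / (Real.pi * (1 + (κ + 1) ^ 2)) ≤ omegaH w (Theta ρ) := by
  have hκ : 0 ≤ κ := nonneg_of_mul_nonneg_left (hρ.trans hρκ) hw
  have hratio : 1 / (1 + (κ + 1) ^ 2) ≤ w.re ^ 2 / (w.re ^ 2 + (ρ + w.re) ^ 2) := by
    rw [div_le_div_iff₀ (by positivity) (by positivity)]
    nlinarith [mul_le_mul hρκ hρκ hρ (by positivity)]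
  rw [omegaH_Theta, ← one_div_mul_one_div]
  exact mul_le_mul_of_nonneg_left (hratio.trans (le_setIntegral_poisson_abs_ge hw hρ))
    (by positivity)

lemma re_ofReal_mul_exp_I_mul (ρ θ : ℝ) :
    ((ρ : ℂ) * Complex.exp (Complex.I * θ)).re = ρ * Real.cos θ := by
  rw [mul_comm Complex.I, Complex.re_ofReal_mul, Complex.exp_ofReal_mul_I_re]

/-- **Lemma 5.3:** for each `θ ∈ (0,π/2)` there is a constant `C(θ) > 0`, depending only
on `θ`, such that for every non-elliptic semigroup with Denjoy-Wolff point `1`, every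
`t ≥ 1` with `|θ_t| ≤ θ` and every `s ≥ t`, `ω(ρ_s e^{iθ_s}, Θ_t, ℍ) ≥ C(θ)`. -/
theorem omegaH_theta_ge_const_of_nontangential
    (θ : ℝ) (hθ : θ ∈ Set.Ioo (0 : ℝ) (Real.pi / 2)) :
    ∃ Cθ : ℝ, 0 < Cθ ∧
      ∀ (φ : ℝ → ℂ → ℂ) (ρ θf : ℝ → ℝ),
        IsNonElliptic φ → IsDenjoyWolff φ 1 →
        (∀ t : ℝ, 0 ≤ t → 0 < ρ t ∧
          θf t ∈ Set.Ioo (-(Real.pi / 2)) (Real.pi / 2) ∧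
          cayley (φ t 0) = (ρ t : ℂ) * Complex.exp (Complex.I * (θf t : ℂ))) →
        ∀ t : ℝ, 1 ≤ t → |θf t| ≤ θ → ∀ s : ℝ, t ≤ s →
          Cθ ≤ omegaH (cayley (φ s 0)) (Theta (ρ t)) := by
  have hcos : 0 < Real.cos θ := Real.cos_pos_of_mem_Ioo ⟨by linarith [hθ.1, Real.pi_pos], hθ.2⟩
  refine ⟨1 / (Real.pi * (1 + ((Real.cos θ)⁻¹ + 1) ^ 2)), by positivity, ?_⟩
  intro φ ρ θf hφ hdw hpolar t ht hθt s hts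
  have ht0 : 0 ≤ t := by linarith
  obtain ⟨hρt, -, hct⟩ := hpolar t ht0
  have hcos_le : Real.cos θ ≤ Real.cos (θf t) := by
    rw [← Real.cos_abs (θf t)]
    exact Real.cos_le_cos_of_nonneg_of_le_pi (abs_nonneg _) (by linarith [hθ.2, Real.pi_pos]) hθt
  have hmono : ρ t * Real.cos (θf t) ≤ (cayley (φ s 0)).re := by
    rw [← re_ofReal_mul_exp_I_mul, ← hct]
    exact hφ.toIsDiscSemigroup.monotoneOn_re_cayley_orbit (hdw.2 0 zero_mem_unitDisc)
      ht0 (ht0.trans hts) hts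
  apply le_omegaH_Theta (cayley_re_pos (hφ.mapsTo s (ht0.trans hts) zero_mem_unitDisc)) hρt.le
  rw [inv_mul_eq_div, le_div_iff₀ hcos]
  nlinarith

end
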